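/- Let P be a path in T with vertex sequence p(1),…,p(k), let u be a vertex not on P that is adjacent in T to the endpoint p(k), and let P' = P ∪ {u}. Assume d(P,u) > 0, 1 − λ·S̄(P') > 0, and α1 + α2·w_{T_u}·((2β/vt)·(w(T) − w_{T_u}) − 1/vt + β/vt) > 0. Then F(P') > F(P). -/

import Mathlib

open scoped ENNReal

noncomputable section

/-- A finite tree with positive edge lengths, nonnegative vertex weights,
and a positive cruising speed. -/
structure WeightedTree (V : Type*) [Fintype V] where
  G : SimpleGraph V
  isTree : G.IsTree
  len : Sym2 V → ℝ
  len_pos : ∀ e ∈ G.edgeSet, 0 < len e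
  w : V → ℝ
  w_nonneg : ∀ v, 0 ≤ w v
  vt : ℝ
  vt_pos : 0 < vt

namespace WeightedTree

variable {V : Type*} [Fintype V] [DecidableEq V] (T : WeightedTree V)

/-- `d x y`: the length of the unique path between `x` and `y`. -/
def d (x y : V) : ℝ :=
  (((T.isTree.existsUnique_path x y).choose).edges.map T.len).sum

/-- The closest vertex of the list `l` (the vertex sequence of a path) to `v`. -/
def closest (l : List V) (v : V) : V :=
  if h : ∃ u ∈ l, ∀ u' ∈ l, T.d u v ≤ T.d u' v then h.choose else v

/-- `d(P,v)`: the distance from the path with vertex sequence `l` to `v`. -/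
def dP (l : List V) (v : V) : ℝ := T.d (T.closest l v) v

/-- The weight of the branch of the vertex `q` with respect to the path with
vertex sequence `l`: the total weight of all vertices whose closest vertex on
the path is `q`. -/
def wBranch (l : List V) (q : V) : ℝ :=
  ∑ v ∈ Finset.univ.filter (fun v => T.closest l v = q), T.w v

/-- `w(T)`: total weight of the tree. -/
def wT : ℝ := ∑ v, T.w v

/-- `d̄_P(û,p) = ∑_j w_{T_{p(j)}} d(p(j), p)` for the path with vertex sequence `l`. -/
def dbar (l : List V) (p : V) : ℝ := (l.map (fun q => T.wBranch l q * T.d q p)).sum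

/-- `s_p(P) = (1/vt) d̄_P(û,p)` for a vertex `p` of the path. -/
def sOn (l : List V) (p : V) : ℝ := (1 / T.vt) * T.dbar l p

/-- `s_i(P) = (1/vt) d̄_P(û,p(i))`, where `p(i)` is the closest vertex of the path to `v_i`. -/
def s (l : List V) (v : V) : ℝ := T.sOn l (T.closest l v)

/-- Mean service time `S̄(P)`. -/
def Sbar (l : List V) : ℝ := ∑ v, T.w v * T.s l v

/-- Second moment `S̄²(P)` of the service time. -/
def S2bar (l : List V) : ℝ := ∑ v, T.w v * (T.s l v) ^ 2

/-- `T̄1(P) = (1/vt) ∑ w_i d(P, v_i)`. -/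
def T1 (l : List V) : ℝ := (1 / T.vt) * ∑ v, T.w v * T.dP l v

/-- `T̄2(P) = (1/vt) ∑ w_i d̄_P(û, p(i))`. -/
def T2 (l : List V) : ℝ := (1 / T.vt) * ∑ v, T.w v * T.dbar l (T.closest l v)

/-- The M/G/1 queueing delay `Q̄(P)`, valued in `[0,∞]`. -/
def Qbar (lam : ℝ) (l : List V) : ℝ≥0∞ :=
  if 0 < 1 - lam * T.Sbar l then
    ENNReal.ofReal (lam * T.S2bar l / (2 * (1 - lam * T.Sbar l)))
  else ⊤

/-- The M/G/1 queueing delay `Q̄(P)` as an extended real. -/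
def QbarE (lam : ℝ) (l : List V) : EReal :=
  if 0 < 1 - lam * T.Sbar l then
    ((lam * T.S2bar l / (2 * (1 - lam * T.Sbar l)) : ℝ) : EReal)
  else ⊤

/-- `|P|`: the total length of the path `P`. -/
def plen {a b : V} (P : T.G.Walk a b) : ℝ := (P.edges.map T.len).sum

/-- The objective `F(P) = α1·|P| + α2·(β·(Q̄(P)+T̄2(P)) + (1-β)·T̄1(P))`. -/
def F (α1 α2 β lam : ℝ) {a b : V} (P : T.G.Walk a b) : EReal :=
  ((α1 * T.plen P : ℝ) : EReal) +
    (α2 : EReal) *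
      ((β : EReal) * (T.QbarE lam P.support + ((T.T2 P.support : ℝ) : EReal)) +
        (((1 - β) * T.T1 P.support : ℝ) : EReal))

end WeightedTree

/-
Appending `u` to `P` only moves the demands of the new branch `T_u` from `b` to `u`. In a tree
every vertex `v` has a gate on a path, its closest vertex `c`: `d(p, v) = d(p, c) + d(c, v)` for
all `p` on the path. With `δ = d(b, u)`, `W = w(T)` and `W_u = w_{T_u}` this gives
`d̄_{P'}(û, p) = d̄_P(û, p) + W_u δ` for `p` on `P` and `d̄_{P'}(û, u) = d̄_P(û, b) + (W - W_u) δ`.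
So every service time grows, `S̄` grows by `2 W_u (W - W_u) δ / vt` and `T̄1` drops by
`W_u δ / vt`. As `S̄` and `S̄²` both grow, so does `Q̄`, and `F(P') - F(P)` is at least `δ` times
the positive quantity of the hypothesis.
-/

open SimpleGraph

theorem SimpleGraph.Walk.IsPath.append {V : Type*} {G : SimpleGraph V} {x y z : V}
    {W₁ : G.Walk x y} {W₂ : G.Walk y z} (h₁ : W₁.IsPath) (h₂ : W₂.IsPath)
    (h : ∀ v ∈ W₁.support, v ∈ W₂.support → v = y) : (W₁.append W₂).IsPath := by
  rw [Walk.isPath_def, Walk.support_append]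
  have h₂' := h₂.support_nodup
  rw [← W₂.cons_tail_support, List.nodup_cons] at h₂'
  refine h₁.support_nodup.append h₂'.2 fun v hv₁ hv₂ => ?_
  exact h₂'.1 (h v hv₁ (List.mem_of_mem_tail hv₂) ▸ hv₂)

theorem SimpleGraph.Walk.IsPath.exists_isPath_support_subset {V : Type*} [DecidableEq V]
    {G : SimpleGraph V} {a b x y : V} {P : G.Walk a b} (hP : P.IsPath)
    (hx : x ∈ P.support) (hy : y ∈ P.support) :
    ∃ W : G.Walk x y, W.IsPath ∧ W.support ⊆ P.support := by
  by_cases h : x ∈ (P.takeUntil y hy).support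
  · exact ⟨(P.takeUntil y hy).dropUntil x h, (hP.takeUntil hy).dropUntil h,
      fun z hz => P.support_takeUntil_subset_support hy
        (Walk.support_dropUntil_subset_support _ h hz)⟩
  · have h' : x ∈ (P.dropUntil y hy).support := by
      rw [← P.take_spec hy, Walk.mem_support_append_iff] at hx
      tauto
    refine ⟨((P.dropUntil y hy).takeUntil x h').reverse,
      ((hP.dropUntil hy).takeUntil h').reverse, fun z hz => ?_⟩
    rw [Walk.support_reverse, List.mem_reverse] at hz
    exact P.support_dropUntil_subset_support hy (Walk.support_takeUntil_subset_support _ h' hz)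

namespace WeightedTree

variable {V : Type*} [Fintype V] (T : WeightedTree V)

lemma sum_len_edges_nonneg {x y : V} (W : T.G.Walk x y) : 0 ≤ (W.edges.map T.len).sum :=
  List.sum_nonneg fun _ hr => by
    obtain ⟨e, he, rfl⟩ := List.mem_map.1 hr
    exact (T.len_pos e (W.edges_subset_edgeSet he)).le

lemma d_eq_of_isPath {x y : V} (W : T.G.Walk x y) (hW : W.IsPath) :
    T.d x y = (W.edges.map T.len).sum := by
  rw [d, ← (T.isTree.existsUnique_path x y).choose_spec.2 W hW]

lemma d_nonneg (x y : V) : 0 ≤ T.d x y :=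
  T.sum_len_edges_nonneg _

lemma d_self (x : V) : T.d x x = 0 := by
  simp [T.d_eq_of_isPath Walk.nil Walk.IsPath.nil]

lemma d_comm (x y : V) : T.d x y = T.d y x := by
  obtain ⟨W, hW, -⟩ := T.isTree.existsUnique_path x y
  rw [T.d_eq_of_isPath W hW, T.d_eq_of_isPath W.reverse hW.reverse, Walk.edges_reverse,
    List.map_reverse, List.sum_reverse]

lemma d_pos {x y : V} (h : x ≠ y) : 0 < T.d x y := by
  obtain ⟨W, hW, -⟩ := T.isTree.existsUnique_path x y
  rw [T.d_eq_of_isPath W hW]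
  cases W with
  | nil => exact absurd rfl h
  | cons hadj W' =>
    rw [Walk.edges_cons, List.map_cons, List.sum_cons]
    linarith [T.len_pos _ (T.G.mem_edgeSet.2 hadj), T.sum_len_edges_nonneg W']

lemma d_of_adj {x y : V} (h : T.G.Adj x y) : T.d x y = T.len s(x, y) := by
  simp [T.d_eq_of_isPath h.toWalk (Walk.IsPath.of_adj h)]

lemma plen_concat {a b u : V} (P : T.G.Walk a b) (hadj : T.G.Adj b u) :
    T.plen (P.concat hadj) = T.plen P + T.d b u := by
  simp [plen, Walk.edges_concat, T.d_of_adj hadj]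

lemma d_eq_add_of_isPath_append {x y z : V} (W₁ : T.G.Walk x y) (W₂ : T.G.Walk y z)
    (h : (W₁.append W₂).IsPath) : T.d x z = T.d x y + T.d y z := by
  rw [T.d_eq_of_isPath _ h, T.d_eq_of_isPath W₁ h.of_append_left,
    T.d_eq_of_isPath W₂ h.of_append_right, Walk.edges_append, List.map_append, List.sum_append]

variable [DecidableEq V]

/-- The gate of `v` on a path: every geodesic from the path to `v` passes through it. -/
lemma exists_gate {a b : V} {P : T.G.Walk a b} (hP : P.IsPath) (v : V) :
    ∃ c ∈ P.support, ∀ p ∈ P.support, T.d p v = T.d p c + T.d c v := by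
  obtain ⟨c, hc, hmin⟩ := P.support.toFinset.exists_min_image (fun p => T.d p v)
    ⟨a, List.mem_toFinset.2 P.start_mem_support⟩
  rw [List.mem_toFinset] at hc
  refine ⟨c, hc, fun p hp => ?_⟩
  obtain ⟨W, hW, hWP⟩ := hP.exists_isPath_support_subset hp hc
  obtain ⟨Q, hQ, -⟩ := T.isTree.existsUnique_path c v
  refine T.d_eq_add_of_isPath_append W Q (hW.append hQ fun z hzW hzQ => ?_)
  -- a common vertex `z ≠ c` would lie on `P` strictly closer to `v` than `c`
  by_contra hzc
  have hsplit := T.d_eq_add_of_isPath_append _ _ ((Q.take_spec hzQ).symm ▸ hQ)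
  linarith [T.d_pos (Ne.symm hzc), hmin z (List.mem_toFinset.2 (hWP hzW))]

lemma closest_eq_of_gate {l : List V} {v c : V} (hc : c ∈ l)
    (hgate : ∀ p ∈ l, T.d p v = T.d p c + T.d c v) : T.closest l v = c := by
  have hex : ∃ u ∈ l, ∀ u' ∈ l, T.d u v ≤ T.d u' v :=
    ⟨c, hc, fun p hp => by rw [hgate p hp]; linarith [T.d_nonneg p c]⟩
  rw [closest, dif_pos hex]
  obtain ⟨hmem, hmin⟩ := hex.choose_spec
  by_contra hne
  linarith [hmin c hc, hgate _ hmem, T.d_pos hne]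

lemma closest_mem_support {a b : V} {P : T.G.Walk a b} (hP : P.IsPath) (v : V) :
    T.closest P.support v ∈ P.support := by
  obtain ⟨c, hc, hgate⟩ := T.exists_gate hP v
  rwa [T.closest_eq_of_gate hc hgate]

lemma dbar_eq_sum_closest {l : List V} (hl : l.Nodup) (hmem : ∀ v, T.closest l v ∈ l)
    (p : V) : T.dbar l p = ∑ v, T.w v * T.d (T.closest l v) p := by
  rw [dbar, ← List.sum_toFinset _ hl]
  calc ∑ q ∈ l.toFinset, T.wBranch l q * T.d q p
      = ∑ q ∈ l.toFinset, ∑ v with T.closest l v = q, T.w v * T.d (T.closest l v) p := by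
        refine Finset.sum_congr rfl fun q _ => ?_
        rw [wBranch, Finset.sum_mul]
        exact Finset.sum_congr rfl fun v hv => by rw [(Finset.mem_filter.1 hv).2]
    _ = _ := Finset.sum_fiberwise_of_maps_to (fun v _ => List.mem_toFinset.2 (hmem v)) _

lemma sum_w_mul_ite_closest (l : List V) (q : V) (c₁ c₂ : ℝ) :
    ∑ v, T.w v * (if T.closest l v = q then c₁ else c₂)
      = T.wBranch l q * c₁ + (T.wT - T.wBranch l q) * c₂ := by
  have hsplit := Finset.sum_filter_add_sum_filter_not Finset.univ (T.closest l · = q) T.w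
  simp only [mul_ite, Finset.sum_ite, ← Finset.sum_mul]
  rw [wBranch, wT, ← hsplit]
  ring

lemma wBranch_le_wT (l : List V) (q : V) : T.wBranch l q ≤ T.wT :=
  Finset.sum_le_sum_of_subset_of_nonneg (Finset.filter_subset _ _)
    fun v _ _ => T.w_nonneg v

lemma wBranch_nonneg (l : List V) (q : V) : 0 ≤ T.wBranch l q :=
  Finset.sum_nonneg fun v _ => T.w_nonneg v

lemma s_nonneg {a b : V} {P : T.G.Walk a b} (hP : P.IsPath) (v : V) :
    0 ≤ T.s P.support v := by
  rw [s, sOn, T.dbar_eq_sum_closest hP.support_nodup (T.closest_mem_support hP)]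
  have := T.vt_pos
  exact mul_nonneg (by positivity)
    (Finset.sum_nonneg fun x _ => mul_nonneg (T.w_nonneg x) (T.d_nonneg _ _))

lemma S2bar_nonneg (l : List V) : 0 ≤ T.S2bar l :=
  Finset.sum_nonneg fun v _ => mul_nonneg (T.w_nonneg v) (sq_nonneg _)

lemma T2_eq_Sbar (l : List V) : T.T2 l = T.Sbar l := by
  rw [T2, Sbar, Finset.mul_sum]
  exact Finset.sum_congr rfl fun v _ => by rw [s, sOn]; ring

section Extension

variable {a b u : V} {P : T.G.Walk a b}

lemma d_eq_add_of_mem_of_adj_end (hP : P.IsPath) (hadj : T.G.Adj b u) (hu : u ∉ P.support)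
    {p : V} (hp : p ∈ P.support) : T.d p u = T.d p b + T.d b u := by
  have hdrop := hP.dropUntil hp
  have hpath := hdrop.concat (fun h => hu (P.support_dropUntil_subset_support hp h)) hadj
  rw [Walk.concat_eq_append] at hpath
  exact T.d_eq_add_of_isPath_append _ _ hpath

lemma closest_concat_cases (hP : P.IsPath) (hadj : T.G.Adj b u) (hu : u ∉ P.support)
    (v : V) :
    (T.closest (P.concat hadj).support v = u ∧ T.closest P.support v = b ∧
      T.d b v = T.d b u + T.d u v) ∨
    (T.closest (P.concat hadj).support v = T.closest P.support v ∧
      T.closest P.support v ∈ P.support) := by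
  have hmem : ∀ {p}, p ∈ P.support → p ∈ (P.concat hadj).support := fun hp => by
    simp [Walk.support_concat, hp]
  obtain ⟨c, hc, hgate⟩ := T.exists_gate (hP.concat hu hadj) v
  rw [T.closest_eq_of_gate hc hgate]
  by_cases hcu : c = u
  · subst hcu
    have hbv : T.d b v = T.d b c + T.d c v := hgate b (hmem P.end_mem_support)
    refine .inl ⟨rfl, T.closest_eq_of_gate P.end_mem_support fun p hp => ?_, hbv⟩
    rw [hgate p (hmem hp), T.d_eq_add_of_mem_of_adj_end hP hadj hu hp, hbv, add_assoc]
  · have hcP : c ∈ P.support := by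
      simpa [Walk.support_concat, hcu] using hc
    rw [T.closest_eq_of_gate hcP fun p hp => hgate p (hmem hp)]
    exact .inr ⟨rfl, hcP⟩

lemma d_closest_concat_of_mem (hP : P.IsPath) (hadj : T.G.Adj b u) (hu : u ∉ P.support)
    {p : V} (hp : p ∈ P.support) (v : V) :
    T.d (T.closest (P.concat hadj).support v) p
      = T.d (T.closest P.support v) p
        + if T.closest (P.concat hadj).support v = u then T.d b u else 0 := by
  rcases T.closest_concat_cases hP hadj hu v with ⟨h', h, -⟩ | ⟨h', hP'⟩
  · rw [h', h, if_pos rfl, T.d_comm u, T.d_comm b,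
      T.d_eq_add_of_mem_of_adj_end hP hadj hu hp]
  · rw [h', if_neg (ne_of_mem_of_not_mem hP' hu), add_zero]

lemma d_closest_concat_end (hP : P.IsPath) (hadj : T.G.Adj b u) (hu : u ∉ P.support)
    (v : V) :
    T.d (T.closest (P.concat hadj).support v) u
      = T.d (T.closest P.support v) b
        + if T.closest (P.concat hadj).support v = u then 0 else T.d b u := by
  rcases T.closest_concat_cases hP hadj hu v with ⟨h', h, -⟩ | ⟨h', hP'⟩
  · rw [h', h, if_pos rfl, T.d_self, T.d_self, add_zero]
  · rw [h', if_neg (ne_of_mem_of_not_mem hP' hu), T.d_eq_add_of_mem_of_adj_end hP hadj hu hP']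

lemma dbar_concat_of_mem (hP : P.IsPath) (hadj : T.G.Adj b u) (hu : u ∉ P.support)
    {p : V} (hp : p ∈ P.support) :
    T.dbar (P.concat hadj).support p
      = T.dbar P.support p + T.wBranch (P.concat hadj).support u * T.d b u := by
  rw [T.dbar_eq_sum_closest (hP.concat hu hadj).support_nodup
      (T.closest_mem_support (hP.concat hu hadj)),
    T.dbar_eq_sum_closest hP.support_nodup (T.closest_mem_support hP)]
  simp only [T.d_closest_concat_of_mem hP hadj hu hp, mul_add, Finset.sum_add_distrib]
  rw [T.sum_w_mul_ite_closest]
  ring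

lemma dbar_concat_end (hP : P.IsPath) (hadj : T.G.Adj b u) (hu : u ∉ P.support) :
    T.dbar (P.concat hadj).support u
      = T.dbar P.support b + (T.wT - T.wBranch (P.concat hadj).support u) * T.d b u := by
  rw [T.dbar_eq_sum_closest (hP.concat hu hadj).support_nodup
      (T.closest_mem_support (hP.concat hu hadj)),
    T.dbar_eq_sum_closest hP.support_nodup (T.closest_mem_support hP)]
  simp only [T.d_closest_concat_end hP hadj hu, mul_add, Finset.sum_add_distrib]
  rw [T.sum_w_mul_ite_closest]
  ring

lemma s_concat (hP : P.IsPath) (hadj : T.G.Adj b u) (hu : u ∉ P.support) (v : V) :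
    T.s (P.concat hadj).support v = T.s P.support v +
      (if T.closest (P.concat hadj).support v = u
        then T.wT - T.wBranch (P.concat hadj).support u
        else T.wBranch (P.concat hadj).support u) * T.d b u / T.vt := by
  rw [s, s, sOn, sOn]
  rcases T.closest_concat_cases hP hadj hu v with ⟨h', h, -⟩ | ⟨h', hP'⟩
  · rw [h', h, if_pos rfl, T.dbar_concat_end hP hadj hu]
    ring
  · rw [h', if_neg (ne_of_mem_of_not_mem hP' hu), T.dbar_concat_of_mem hP hadj hu hP']
    ring

lemma s_le_s_concat (hP : P.IsPath) (hadj : T.G.Adj b u) (hu : u ∉ P.support) (v : V) :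
    T.s P.support v ≤ T.s (P.concat hadj).support v := by
  rw [T.s_concat hP hadj hu]
  refine le_add_of_nonneg_right (div_nonneg (mul_nonneg ?_ (T.d_nonneg b u)) T.vt_pos.le)
  split_ifs
  · exact sub_nonneg.2 (T.wBranch_le_wT _ u)
  · exact T.wBranch_nonneg _ u

lemma Sbar_concat (hP : P.IsPath) (hadj : T.G.Adj b u) (hu : u ∉ P.support) :
    T.Sbar (P.concat hadj).support = T.Sbar P.support
      + 2 * T.wBranch (P.concat hadj).support u
        * (T.wT - T.wBranch (P.concat hadj).support u) * T.d b u / T.vt := by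
  simp only [Sbar, T.s_concat hP hadj hu, mul_add, Finset.sum_add_distrib, ite_mul, ite_div]
  rw [T.sum_w_mul_ite_closest]
  ring

lemma Sbar_le_Sbar_concat (hP : P.IsPath) (hadj : T.G.Adj b u) (hu : u ∉ P.support) :
    T.Sbar P.support ≤ T.Sbar (P.concat hadj).support :=
  Finset.sum_le_sum fun v _ =>
    mul_le_mul_of_nonneg_left (T.s_le_s_concat hP hadj hu v) (T.w_nonneg v)

lemma S2bar_le_S2bar_concat (hP : P.IsPath) (hadj : T.G.Adj b u) (hu : u ∉ P.support) :
    T.S2bar P.support ≤ T.S2bar (P.concat hadj).support :=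
  Finset.sum_le_sum fun v _ => mul_le_mul_of_nonneg_left
    (pow_le_pow_left₀ (T.s_nonneg hP v) (T.s_le_s_concat hP hadj hu v) 2) (T.w_nonneg v)

lemma dP_concat (hP : P.IsPath) (hadj : T.G.Adj b u) (hu : u ∉ P.support) (v : V) :
    T.dP (P.concat hadj).support v = T.dP P.support v
      - if T.closest (P.concat hadj).support v = u then T.d b u else 0 := by
  rw [dP, dP]
  rcases T.closest_concat_cases hP hadj hu v with ⟨h', h, hbv⟩ | ⟨h', hP'⟩
  · rw [h', h, if_pos rfl, hbv]
    ring
  · rw [h', if_neg (ne_of_mem_of_not_mem hP' hu), sub_zero]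

lemma T1_concat (hP : P.IsPath) (hadj : T.G.Adj b u) (hu : u ∉ P.support) :
    T.T1 (P.concat hadj).support
      = T.T1 P.support - T.wBranch (P.concat hadj).support u * T.d b u / T.vt := by
  simp only [T1, T.dP_concat hP hadj hu, mul_sub, Finset.sum_sub_distrib]
  rw [T.sum_w_mul_ite_closest]
  ring

end Extension

/-- `QbarE` without its `⊤` branch; the two agree only when `0 < 1 - lam * S̄`. -/
def Qreal (lam : ℝ) (l : List V) : ℝ := lam * T.S2bar l / (2 * (1 - lam * T.Sbar l))

lemma Qreal_le_Qreal {lam : ℝ} (hlam : 0 ≤ lam) {l l' : List V}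
    (hS : T.Sbar l ≤ T.Sbar l') (hS2 : T.S2bar l ≤ T.S2bar l')
    (hstable : 0 < 1 - lam * T.Sbar l') : T.Qreal lam l ≤ T.Qreal lam l' :=
  div_le_div₀ (mul_nonneg hlam (T.S2bar_nonneg l')) (mul_le_mul_of_nonneg_left hS2 hlam)
    (by linarith) (by nlinarith)

lemma F_eq_of_stable (α1 α2 β : ℝ) {lam : ℝ} {a b : V} (P : T.G.Walk a b)
    (hstable : 0 < 1 - lam * T.Sbar P.support) :
    T.F α1 α2 β lam P = ((α1 * T.plen P + α2 * (β * (T.Qreal lam P.support + T.Sbar P.support)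
      + (1 - β) * T.T1 P.support) : ℝ) : EReal) := by
  rw [F, QbarE, if_pos hstable, T2_eq_Sbar, Qreal]
  norm_cast

end WeightedTree

theorem F_lt_of_extension_general {V : Type*} [Fintype V] [DecidableEq V] (T : WeightedTree V)
    {a b u : V} (P : T.G.Walk a b) (hP : P.IsPath)
    (hadj : T.G.Adj b u) (hu : u ∉ P.support)
    (lam α1 α2 β : ℝ) (hlam : 0 < lam) (hα2 : 0 ≤ α2)
    (hβ0 : 0 ≤ β)
    (hstable : 0 < 1 - lam * T.Sbar (P.concat hadj).support)
    (hcond : 0 < α1 + α2 * T.wBranch (P.concat hadj).support u *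
        ((2 * β / T.vt) * (T.wT - T.wBranch (P.concat hadj).support u)
          - 1 / T.vt + β / T.vt)) :
    T.F α1 α2 β lam P < T.F α1 α2 β lam (P.concat hadj) := by
  have hbu : 0 < T.d b u := T.d_pos hadj.ne
  have hSbar_le := T.Sbar_le_Sbar_concat hP hadj hu
  have hstable₀ : 0 < 1 - lam * T.Sbar P.support := hstable.trans_le (by gcongr)
  have hQ := T.Qreal_le_Qreal hlam.le hSbar_le (T.S2bar_le_S2bar_concat hP hadj hu) hstable
  rw [T.F_eq_of_stable _ _ _ _ hstable₀, T.F_eq_of_stable _ _ _ _ hstable, EReal.coe_lt_coe_iff,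
    T.plen_concat, T.Sbar_concat hP hadj hu, T.T1_concat hP hadj hu]
  -- `F(P') - F(P) = (the quantity in hcond) · d(b,u) + α2 β (Q̄(P') - Q̄(P))`
  linear_combination mul_pos hcond hbu + mul_nonneg (mul_nonneg hα2 hβ0) (sub_nonneg.2 hQ)

/-- a sufficient condition under which extending a path `P` by an
adjacent vertex `u` strictly increases the objective `F`. -/
theorem F_lt_of_extension {V : Type*} [Fintype V] [DecidableEq V] (T : WeightedTree V)
    {a b u : V} (P : T.G.Walk a b) (hP : P.IsPath)
    (hadj : T.G.Adj b u) (hu : u ∉ P.support)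
    (lam α1 α2 β : ℝ) (hlam : 0 < lam) (hα1 : 0 ≤ α1) (hα2 : 0 ≤ α2)
    (hβ0 : 0 ≤ β) (hβ1 : β ≤ 1)
    (hd : 0 < T.dP P.support u)
    (hstable : 0 < 1 - lam * T.Sbar (P.concat hadj).support)
    (hcond : 0 < α1 + α2 * T.wBranch (P.concat hadj).support u *
        ((2 * β / T.vt) * (T.wT - T.wBranch (P.concat hadj).support u)
          - 1 / T.vt + β / T.vt)) :
    T.F α1 α2 β lam P < T.F α1 α2 β lam (P.concat hadj) :=
  F_lt_of_extension_general T P hP hadj hu lam α1 α2 β hlam hα2 hβ0 hstable hcond
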